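/- (Matching hypothesis vanishing) Fix a prime power q, m ≥ 1, 1 ≤ s ≤ 3, and set k = 4 - s. Let f ∈ F_q[x_1,...,x_k] and G ∈ F_q[x_1,x_2,x_3], and suppose that for every monomial x^α of f and every monomial x^γ of G there exists t ∈ {1,...,k} with α_t + γ_t ≥ q^m - 1. Let L_k be the k×k Moore determinant in x_1,...,x_k, and let V be any polynomial in F_q[x_1,x_2,x_3,x_4] with nonnegative exponents (e.g. V_4^{q-1}). Then V · G · f · L_k lies in the Frobenius ideal I_m(4) = (x_1^{q^m}, x_2^{q^m}, x_3^{q^m}, x_4^{q^m}). -/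
import Mathlib

open MvPolynomial

lemma aux_prod_monomial {σ R ι : Type*} [CommSemiring R] (s : Finset ι) (e : ι → (σ →₀ ℕ)) :
    ∏ i ∈ s, monomial (e i) (1:R) = monomial (∑ i ∈ s, e i) 1 := by
  induction s using Finset.cons_induction with
  | empty => simp
  | cons a s ha ih => rw [Finset.prod_cons, Finset.sum_cons, ih, monomial_mul, one_mul]

lemma aux_mem_span {F : Type*} [CommRing F] {n N : ℕ}
    (P : MvPolynomial (Fin n) F)
    (h : ∀ d ∈ P.support, ∃ t : Fin n, N ≤ d t) :
    P ∈ Ideal.span (Set.range fun i : Fin n => (X i : MvPolynomial (Fin n) F) ^ N) := by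
  rw [P.as_sum]
  apply Ideal.sum_mem
  intro d hd
  obtain ⟨t, ht⟩ := h d hd
  have : monomial d (P.coeff d) =
      monomial (d - Finsupp.single t N) (P.coeff d) * (X t : MvPolynomial (Fin n) F) ^ N := by
    rw [X_pow_eq_monomial, monomial_mul, mul_one]
    have hdd : (d - Finsupp.single t N) + Finsupp.single t N = d := by
      ext i
      rw [Finsupp.add_apply, Finsupp.tsub_apply]
      by_cases hi : i = t
      · subst hi; simp only [Finsupp.single_eq_same]; omega
      · simp [Finsupp.single_apply, Ne.symm hi]
    rw [hdd]
  rw [this]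
  exact Ideal.mul_mem_left _ _ (Ideal.subset_span ⟨t, rfl⟩)

theorem stmt_2 (p r q m s : ℕ) (hp : p.Prime) (hq : q = p ^ r) (hr : 1 ≤ r) (hm : 1 ≤ m)
    (hs1 : 1 ≤ s) (hs3 : s ≤ 3) (k : ℕ) (hk : k = 4 - s) (hk4 : k ≤ 4)
    (F : Type*) [Field F] [Fintype F] (hF : Fintype.card F = q)
    (f G V : MvPolynomial (Fin 4) F)
    (hfvars : ∀ α ∈ f.support, ∀ i : Fin 4, k ≤ (i : ℕ) → α i = 0)
    (hGvars : ∀ γ ∈ G.support, ∀ i : Fin 4, 3 ≤ (i : ℕ) → γ i = 0)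
    (hmatch : ∀ α ∈ f.support, ∀ γ ∈ G.support,
      ∃ t : Fin 4, (t : ℕ) < k ∧ q ^ m - 1 ≤ α t + γ t)
    (L : MvPolynomial (Fin 4) F)
    (hL : L = Matrix.det (Matrix.of fun i j : Fin k =>
      (X (Fin.castLE hk4 i) : MvPolynomial (Fin 4) F) ^ q ^ (j : ℕ))) :
    V * G * f * L ∈ Ideal.span (Set.range fun i : Fin 4 =>
      (X i : MvPolynomial (Fin 4) F) ^ q ^ m) := by
  have hq1 : 1 ≤ q := by
    subst hq; exact Nat.one_le_pow _ _ hp.pos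
  -- every monomial of L has exponent ≥ 1 at each variable t with t < k
  have hLsupp : ∀ d ∈ L.support, ∀ t : Fin 4, (t : ℕ) < k → 1 ≤ d t := by
    intro d hd t ht
    subst hL
    rw [Matrix.det_apply] at hd
    have hd' := MvPolynomial.support_sum hd
    rw [Finset.mem_biUnion] at hd'
    obtain ⟨σ, -, hdσ⟩ := hd'
    have hdσ' := MvPolynomial.support_smul hdσ
    have hprod : (∏ i : Fin k, Matrix.of (fun i j : Fin k =>
        (X (Fin.castLE hk4 i) : MvPolynomial (Fin 4) F) ^ q ^ (j : ℕ)) (σ i) i)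
        = monomial (∑ i : Fin k, Finsupp.single (Fin.castLE hk4 (σ i)) (q ^ (i : ℕ))) 1 := by
      rw [← aux_prod_monomial]
      refine Finset.prod_congr rfl fun i _ => ?_
      simp [X_pow_eq_monomial]
    rw [hprod] at hdσ'
    rw [mem_support_iff, coeff_monomial] at hdσ'
    have hdeq : (∑ i : Fin k, Finsupp.single (Fin.castLE hk4 (σ i)) (q ^ (i : ℕ))) = d := by
      by_contra h
      simp [h] at hdσ'
    subst hdeq
    set t' : Fin k := ⟨(t : ℕ), ht⟩ with ht'
    have htt : Fin.castLE hk4 t' = t := by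
      ext; rfl
    have hone : Finsupp.single (Fin.castLE hk4 (σ (σ.symm t'))) (q ^ ((σ.symm t' : ℕ))) t
        = q ^ ((σ.symm t' : ℕ)) := by
      rw [Equiv.apply_symm_apply, htt, Finsupp.single_eq_same]
    calc (1 : ℕ) ≤ q ^ ((σ.symm t' : ℕ)) := Nat.one_le_pow _ _ hq1
      _ = Finsupp.single (Fin.castLE hk4 (σ (σ.symm t'))) (q ^ ((σ.symm t' : ℕ))) t := hone.symm
      _ ≤ ∑ i : Fin k, Finsupp.single (Fin.castLE hk4 (σ i)) (q ^ (i : ℕ)) t :=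
          Finset.single_le_sum
            (f := fun i : Fin k => Finsupp.single (Fin.castLE hk4 (σ i)) (q ^ (i : ℕ)) t)
            (fun i _ => Nat.zero_le _) (Finset.mem_univ (σ.symm t'))
      _ = _ := (Finsupp.finset_sum_apply _ _ _).symm
  apply aux_mem_span
  intro d hd
  have h1 := MvPolynomial.support_mul _ _ hd
  rw [Finset.mem_add] at h1
  obtain ⟨a, ha, b, hb, hab⟩ := h1
  have h2 := MvPolynomial.support_mul _ _ ha
  rw [Finset.mem_add] at h2
  obtain ⟨c, hc, α, hα, hcα⟩ := h2
  have h3 := MvPolynomial.support_mul _ _ hc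
  rw [Finset.mem_add] at h3
  obtain ⟨v, hv, γ, hγ, hvγ⟩ := h3
  obtain ⟨t, htk, hsum⟩ := hmatch α hα γ hγ
  refine ⟨t, ?_⟩
  have hb1 := hLsupp b hb t htk
  have : d t = v t + γ t + α t + b t := by
    subst hab hcα hvγ; simp [Finsupp.add_apply]
  have hqm : 1 ≤ q ^ m := Nat.one_le_pow _ _ hq1
  omega
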